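/- Let $\theta \in (0,1)$, $c \ge 0$, and $t > 0$, and let $R$ be a nonnegative random variable with $\mathbb{P}(R > r) \le c\, e^{-2\theta r}$ for all $r \ge 0$. Then $\mathbb{E}\big[e^{-(2-\theta)(t - \min(R,t))}\big] \le C (1+t)\, e^{-t \min\{2\theta, 2-\theta\}}$ for some constant $C = C(c,\theta)$ not depending on $t$. -/

import Mathlib

/-!
Write `m = t - min R t ∈ [0, t]` and `k = ⌊m⌋`. Then `e^{-(2-θ)m} ≤ e^{-(2-θ)k} 𝟙{R > t - k - 1}`,
so the expectation is at most `∑_{k ≤ ⌊t⌋} ℙ(R > t - k - 1) e^{-(2-θ)k}`. Each of these `⌊t⌋ + 1`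
terms is `O(e^{-t min(2θ, 2-θ)})`: by the tail bound when `t - k - 1 ≥ 0`, and because
`k > t - 1` otherwise.
-/

open MeasureTheory ProbabilityTheory Real Set Finset

noncomputable def stepMajorant (a t : ℝ) (r : ℝ) : ℝ :=
  ∑ k ∈ range (⌊t⌋₊ + 1), (Ioi (t - (k + 1))).indicator (fun _ => exp (-a * k)) r

lemma exp_neg_mul_sub_min_le_stepMajorant {a t r : ℝ} (ha : 0 ≤ a) (ht : 0 ≤ t) (hr : 0 ≤ r) :
    exp (-a * (t - min r t)) ≤ stepMajorant a t r := by
  set m := t - min r t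
  have hm0 : 0 ≤ m := sub_nonneg.2 (min_le_right r t)
  have hmt : m ≤ t := sub_le_self t (le_min hr ht)
  have hk : ⌊m⌋₊ ∈ range (⌊t⌋₊ + 1) := mem_range_succ_iff.2 (Nat.floor_le_floor hmt)
  have hr_mem : r ∈ Ioi (t - (⌊m⌋₊ + 1)) := by
    have := Nat.lt_floor_add_one m
    have := min_le_left r t
    simp only [Set.mem_Ioi]; linarith
  calc exp (-a * m) ≤ exp (-a * ⌊m⌋₊) :=
        exp_le_exp.2 (mul_le_mul_of_nonpos_left (Nat.floor_le hm0) (neg_nonpos.2 ha))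
    _ = (Ioi (t - (⌊m⌋₊ + 1))).indicator (fun _ => exp (-a * ⌊m⌋₊)) r := by
        rw [indicator_of_mem hr_mem]
    _ ≤ stepMajorant a t r :=
        single_le_sum (f := fun k : ℕ => (Ioi (t - (k + 1))).indicator (fun _ => exp (-a * k)) r)
          (fun k _ => indicator_nonneg (fun _ _ => (exp_pos _).le) r) hk

lemma stepMajorant_comp {Ω : Type*} (a t : ℝ) (R : Ω → ℝ) :
    (fun ω => stepMajorant a t (R ω)) = fun ω =>
      ∑ k ∈ range (⌊t⌋₊ + 1), (R ⁻¹' Ioi (t - (k + 1))).indicator (fun _ => exp (-a * k)) ω :=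
  rfl

section
variable {Ω : Type*} [MeasurableSpace Ω] {P : Measure Ω} [IsFiniteMeasure P] {R : Ω → ℝ}

lemma integrable_stepMajorant_comp (a t : ℝ) (hR : Measurable R) :
    Integrable (fun ω => stepMajorant a t (R ω)) P := by
  rw [stepMajorant_comp]
  exact integrable_finsetSum _ fun k _ =>
    (integrable_const (exp (-a * k))).indicator (measurableSet_Ioi.preimage hR)

lemma integral_stepMajorant_comp (a t : ℝ) (hR : Measurable R) :
    ∫ ω, stepMajorant a t (R ω) ∂P =
      ∑ k ∈ range (⌊t⌋₊ + 1), P.real {ω | t - (k + 1) < R ω} * exp (-a * k) := by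
  have hmeas (k : ℕ) : MeasurableSet (R ⁻¹' Ioi (t - (k + 1))) :=
    measurableSet_Ioi.preimage hR
  rw [stepMajorant_comp, integral_finsetSum _ fun (k : ℕ) _ =>
    (integrable_const (exp (-a * k))).indicator (hmeas k)]
  refine Finset.sum_congr rfl fun k _ => ?_
  rw [integral_indicator_const _ (hmeas k), smul_eq_mul]
  rfl

end

lemma mul_exp_neg_le_of_tail_le {a β c p t k : ℝ} (ha : 0 ≤ a) (hc : 0 ≤ c) (hp1 : p ≤ 1)
    (hp : 0 ≤ t - (k + 1) → p ≤ c * exp (-β * (t - (k + 1)))) (hk0 : 0 ≤ k) (hkt : k ≤ t) :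
    p * exp (-a * k) ≤ (c * exp β + exp a) * exp (-t * min β a) := by
  have hμβ := min_le_left β a
  have hμa := min_le_right β a
  rcases le_or_gt 0 (t - (k + 1)) with hs | hs
  · calc p * exp (-a * k) ≤ c * exp (-β * (t - (k + 1))) * exp (-a * k) := by
          gcongr; exact hp hs
      _ = c * exp β * exp (-β * (t - k) - a * k) := by
          rw [mul_assoc, mul_assoc, ← exp_add, ← exp_add]; ring_nf
      _ ≤ c * exp β * exp (-t * min β a) := by
          gcongr
          nlinarith [mul_le_mul_of_nonneg_right hμβ (sub_nonneg.2 hkt),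
            mul_le_mul_of_nonneg_right hμa hk0]
      _ ≤ (c * exp β + exp a) * exp (-t * min β a) := by
          gcongr; exact le_add_of_nonneg_right (exp_pos a).le
  · calc p * exp (-a * k) ≤ exp (-a * k) := mul_le_of_le_one_left (exp_pos _).le hp1
      _ ≤ exp a * exp (-t * min β a) := by
          rw [← exp_add]
          gcongr
          nlinarith [mul_le_mul_of_nonneg_left hμa (hk0.trans hkt)]
      _ ≤ (c * exp β + exp a) * exp (-t * min β a) := by
          gcongr; exact le_add_of_nonneg_left (by positivity)

/-- Key single-site estimate: if `R ≥ 0` has tail `P(R > r) ≤ c e^{-2θr}`, then there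
is `C = C(c,θ)` with `E[e^{-(2-θ)(t - min(R,t))}] ≤ C (1+t) e^{-t·min{2θ, 2-θ}}`
for all positive `t`. -/
theorem truncated_exp_moment_bound (θ c : ℝ) (hθ : θ ∈ Set.Ioo (0 : ℝ) 1)
    (hc : 0 ≤ c) :
    ∃ C : ℝ, 0 < C ∧ ∀ (t : ℝ), 0 < t →
      ∀ (Ω : Type) (_ : MeasureSpace Ω) (_ : IsProbabilityMeasure (ℙ : Measure Ω))
        (R : Ω → ℝ), Measurable R → (∀ ω, 0 ≤ R ω) →
        (∀ r : ℝ, 0 ≤ r → (ℙ {ω | r < R ω}).toReal ≤ c * Real.exp (-2 * θ * r)) →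
        ∫ ω, Real.exp (-(2 - θ) * (t - min (R ω) t)) ≤
          C * (1 + t) * Real.exp (-t * min (2 * θ) (2 - θ)) := by
  have ha : 0 ≤ 2 - θ := by linarith [hθ.2]
  refine ⟨c * exp (2 * θ) + exp (2 - θ), by positivity, ?_⟩
  intro t ht Ω _ _ R hR hR0 htail
  calc ∫ ω, exp (-(2 - θ) * (t - min (R ω) t))
      ≤ ∫ ω, stepMajorant (2 - θ) t (R ω) :=
        integral_mono_of_nonneg (.of_forall fun _ => (exp_pos _).le)
          (integrable_stepMajorant_comp _ _ hR)
          (.of_forall fun ω => exp_neg_mul_sub_min_le_stepMajorant ha ht.le (hR0 ω))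
    _ = ∑ k ∈ range (⌊t⌋₊ + 1),
          (ℙ : Measure Ω).real {ω | t - (k + 1) < R ω} * exp (-(2 - θ) * k) :=
        integral_stepMajorant_comp _ _ hR
    _ ≤ ∑ _k ∈ range (⌊t⌋₊ + 1),
          (c * exp (2 * θ) + exp (2 - θ)) * exp (-t * min (2 * θ) (2 - θ)) := by
        refine sum_le_sum fun k hk => mul_exp_neg_le_of_tail_le ha hc measureReal_le_one
          (fun hs => (htail _ hs).trans_eq (by rw [neg_mul])) k.cast_nonneg ?_
        exact (Nat.cast_le.2 (mem_range_succ_iff.1 hk)).trans (Nat.floor_le ht.le)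
    _ ≤ (c * exp (2 * θ) + exp (2 - θ)) * (1 + t) * exp (-t * min (2 * θ) (2 - θ)) := by
        rw [sum_const, card_range, nsmul_eq_mul, ← mul_assoc, mul_comm _ (_ + _)]
        gcongr
        push_cast
        linarith [Nat.floor_le ht.le]
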